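/- Let g ∈ ℝ^K and suppose there exists k ∈ [K] and δ > 0 such that g_ℓ - g_k ≥ δ for all ℓ ≠ k. Let v be the indicator vector with v_k = 1 and v_ℓ = 0 for ℓ ≠ k. Then for any g' ∈ ℝ^K and any v' which is an indicator vector of a minimal coordinate of g' (i.e., v'_{k'} = 1 where g'_{k'} ≤ g'_{ℓ'} for all ℓ'), it holds that ‖v - v'‖ ≤ (2/δ)‖g - g'‖. -/
import Mathlib


/-- If `g ℓ - g k ≥ δ` for all `ℓ ≠ k`, `v` is the one-hot vector at `k`, and `v'`
is a one-hot vector at a minimizing coordinate `k'` of `g'`, then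
`‖v - v'‖ ≤ (2/δ) ‖g - g'‖` (Euclidean norms). -/
theorem stmt0 (K : ℕ) (g g' : Fin K → ℝ) (δ : ℝ) (hδ : 0 < δ) (k : Fin K)
    (hgap : ∀ ℓ, ℓ ≠ k → δ ≤ g ℓ - g k)
    (k' : Fin K) (hk' : ∀ ℓ, g' k' ≤ g' ℓ)
    (v v' : Fin K → ℝ)
    (hv : v = fun i => if i = k then 1 else 0)
    (hv' : v' = fun i => if i = k' then 1 else 0) :
    Real.sqrt (∑ i, (v i - v' i) ^ 2) ≤ (2 / δ) * Real.sqrt (∑ i, (g i - g' i) ^ 2) := by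
  subst hv hv'
  have hSnn : 0 ≤ Real.sqrt (∑ i, (g i - g' i) ^ 2) := Real.sqrt_nonneg _
  by_cases hkk : k' = k
  · subst hkk
    simp only [sub_self]
    simpa using mul_nonneg (by positivity : (0:ℝ) ≤ 2 / δ) hSnn
  · -- LHS = √2
    have hL : (∑ i, (((if i = k then (1:ℝ) else 0)) - (if i = k' then 1 else 0)) ^ 2) = 2 := by
      have : ∀ i : Fin K, (((if i = k then (1:ℝ) else 0)) - (if i = k' then 1 else 0)) ^ 2
          = (if i = k then (1:ℝ) else 0) + (if i = k' then 1 else 0) := by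
        intro i
        by_cases h1 : i = k <;> by_cases h2 : i = k' <;>
          simp_all <;> norm_num
      rw [Finset.sum_congr rfl (fun i _ => this i), Finset.sum_add_distrib]
      simp
      norm_num
    rw [hL]
    set a := |g k - g' k| with ha
    set b := |g k' - g' k'| with hb
    have hδab : δ ≤ a + b := by
      have h1 := hgap k' hkk
      have h2 := hk' k
      have : δ ≤ (g k' - g' k') + (g' k - g k) := by linarith
      calc δ ≤ (g k' - g' k') + (g' k - g k) := this
        _ ≤ b + a := add_le_add (le_abs_self _) (by
              rw [ha, abs_sub_comm]; exact le_abs_self _)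
        _ = a + b := add_comm _ _
    have hsub : a ^ 2 + b ^ 2 ≤ ∑ i, (g i - g' i) ^ 2 := by
      have := Finset.sum_le_sum_of_subset_of_nonneg
        (Finset.subset_univ ({k, k'} : Finset (Fin K)))
        (fun i _ _ => sq_nonneg (g i - g' i))
      rw [Finset.sum_pair (Ne.symm hkk)] at this
      simpa [ha, hb, sq_abs] using this
    have hS2 : Real.sqrt (a ^ 2 + b ^ 2) ≤ Real.sqrt (∑ i, (g i - g' i) ^ 2) :=
      Real.sqrt_le_sqrt hsub
    have hab : a + b ≤ Real.sqrt 2 * Real.sqrt (a ^ 2 + b ^ 2) := by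
      rw [← Real.sqrt_mul_self (by positivity : (0:ℝ) ≤ a + b),
        ← Real.sqrt_mul (by norm_num)]
      apply Real.sqrt_le_sqrt
      nlinarith [sq_nonneg (a - b)]
    have h2 : Real.sqrt 2 * Real.sqrt 2 = 2 := Real.mul_self_sqrt (by norm_num)
    have hsq2 : (0:ℝ) < Real.sqrt 2 := Real.sqrt_pos.mpr (by norm_num)
    rw [div_mul_eq_mul_div, le_div_iff₀ hδ]
    calc Real.sqrt 2 * δ ≤ Real.sqrt 2 * (Real.sqrt 2 * Real.sqrt (a^2+b^2)) := by
          apply mul_le_mul_of_nonneg_left _ hsq2.le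
          exact hδab.trans hab
      _ = 2 * Real.sqrt (a^2+b^2) := by rw [← mul_assoc, h2]
      _ ≤ 2 * Real.sqrt (∑ i, (g i - g' i) ^ 2) := by linarith
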